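/- For the relativistic radiation variables, the linear map (f_r, E_r) ↦ (S_r, τ_r) given by S_r = (4/3)E_r W² v + W f_r(1+v²), τ_r = (4/3)E_r W² + 2W f_r v − E_r/3 is invertible for every velocity v with |v| < 1, where W = 1/√(1−v²). -/
import Mathlib

/-- the linear map (f_r, E_r) ↦ (S_r, τ_r) of the relativistic
radiation variables is invertible for every |v| < 1. -/
theorem radiation_variables_invertible
    (v : ℝ) (hv : v ^ 2 < 1)
    (W : ℝ) (hW : W = 1 / Real.sqrt (1 - v ^ 2))
    (M : Matrix (Fin 2) (Fin 2) ℝ)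
    (hM : M = !![W * (1 + v ^ 2), (4/3) * W ^ 2 * v;
                 2 * W * v,       (4/3) * W ^ 2 - 1/3]) :
    M.det ≠ 0 := by
  have h1 : (0:ℝ) < 1 - v ^ 2 := by linarith
  have hs : Real.sqrt (1 - v ^ 2) > 0 := Real.sqrt_pos.mpr h1
  have hWpos : 0 < W := by rw [hW]; positivity
  have hW2 : W ^ 2 * (1 - v ^ 2) = 1 := by
    rw [hW]; rw [div_pow, one_pow, Real.sq_sqrt h1.le]
    field_simp
  subst hM
  rw [Matrix.det_fin_two_of]
  have hdet : W * (1 + v ^ 2) * ((4/3) * W ^ 2 - 1/3) - (4/3) * W ^ 2 * v * (2 * W * v)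
      = (W / 3) * (3 - v ^ 2) + (4/3) * W * (W ^ 2 * (1 - v ^ 2) - 1) := by ring
  rw [hdet, hW2]
  nlinarith [hWpos, hv, sq_nonneg v]
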